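/- arXiv:2501.08210 — 2 statements merged into one kernel-verified Lean document; each statement's English description precedes it below -/
import Mathlib

section
/- The projection onto the closed ball of radius α of the mixed ℓ_{1,2} norm maps x to the vector whose 𝔤-th group is (x_𝔤/‖x_𝔤‖₂)·max(‖x_𝔤‖₂ − β, 0), where the vector of group norms (‖x_𝔤‖₂)_𝔤 projected onto the ℓ₁-ball of radius α equals (max(‖x_𝔤‖₂ − β, 0))_𝔤 for some β ≥ 0. That is, if (r_𝔤)_𝔤 with r_𝔤 = ‖x_𝔤‖₂ and P_{ℓ₁-ball}(r) = (max(r_𝔤 − β, 0))_𝔤, then P_{B_{ℓ1,2}}(x)_𝔤 = (max(r_𝔤 − β,0)/r_𝔤) x_𝔤 (interpreted as 0 when r_𝔤 = 0). -/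
/-!
Grouping coordinates and taking the Euclidean norm of each group is a map
`G : ℝⁿ → ℝᴷ` that preserves the Euclidean norm and is `1`-Lipschitz (the reverse triangle
inequality in each group), and the `ℓ_{1,2}`-norm of `v` is the `ℓ₁`-norm of `G v`.
Rescaling every group of `x` by `soft_𝔤 / r_𝔤` gives a point `y` with `G y = soft` and
`‖y - x‖ = ‖soft - r‖`. Hence `y` lies in the ball, and for any `z` in the ball `G z` lies
in the `ℓ₁`-ball, so `‖y - x‖ = ‖soft - r‖ ≤ ‖G z - G x‖ ≤ ‖z - x‖`.
-/

open Finset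

theorem sqrt_sum_sq_sub_sqrt_sum_sq_sq_le {ι : Type*} (s : Finset ι) (f g : ι → ℝ) :
    (√(∑ i ∈ s, f i ^ 2) - √(∑ i ∈ s, g i ^ 2)) ^ 2 ≤ ∑ i ∈ s, (f i - g i) ^ 2 := by
  have hf := Real.sq_sqrt (sum_nonneg fun i (_ : i ∈ s) => sq_nonneg (f i))
  have hg := Real.sq_sqrt (sum_nonneg fun i (_ : i ∈ s) => sq_nonneg (g i))
  have hcs := Real.sum_mul_le_sqrt_mul_sqrt s f g
  have hexpand : ∑ i ∈ s, (f i - g i) ^ 2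
      = ∑ i ∈ s, f i ^ 2 - 2 * ∑ i ∈ s, f i * g i + ∑ i ∈ s, g i ^ 2 := by
    rw [mul_sum, ← sum_sub_distrib, ← sum_add_distrib]
    exact sum_congr rfl fun i _ => by ring
  nlinarith

theorem abs_div_mul_self_of_imp {a b : ℝ} (hb : 0 ≤ b) (h : b = 0 → a = 0) :
    |a / b| * b = |a| := by
  rcases hb.eq_or_lt with rfl | hb
  · simp [h rfl]
  · rw [abs_div, abs_of_pos hb, div_mul_cancel₀ _ hb.ne']

theorem abs_div_sub_one_mul_self_of_imp {a b : ℝ} (hb : 0 ≤ b) (h : b = 0 → a = 0) :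
    |a / b - 1| * b = |a - b| := by
  rcases hb.eq_or_lt with rfl | hb
  · simp [h rfl]
  · rw [div_sub_one hb.ne', abs_div_mul_self_of_imp hb.le fun h => absurd h hb.ne']

section GroupNorms

variable {ι κ : Type*} [Fintype ι] [DecidableEq κ] (gr : ι → κ)

noncomputable def groupNorms (v : EuclideanSpace ℝ ι) : EuclideanSpace ℝ κ :=
  WithLp.toLp 2 fun g => √(∑ i with gr i = g, v i ^ 2)

@[simp]
theorem groupNorms_apply (v : EuclideanSpace ℝ ι) (g : κ) :
    groupNorms gr v g = √(∑ i with gr i = g, v i ^ 2) :=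
  rfl

theorem groupNorms_nonneg (v : EuclideanSpace ℝ ι) (g : κ) : 0 ≤ groupNorms gr v g :=
  Real.sqrt_nonneg _

theorem sq_groupNorms_apply (v : EuclideanSpace ℝ ι) (g : κ) :
    groupNorms gr v g ^ 2 = ∑ i with gr i = g, v i ^ 2 :=
  Real.sq_sqrt (sum_nonneg fun i _ => sq_nonneg (v i))

@[simp]
theorem norm_groupNorms [Fintype κ] (v : EuclideanSpace ℝ ι) : ‖groupNorms gr v‖ = ‖v‖ := by
  rw [← sq_eq_sq₀ (norm_nonneg _) (norm_nonneg _), EuclideanSpace.real_norm_sq_eq,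
    EuclideanSpace.real_norm_sq_eq, ← sum_fiberwise univ gr]
  exact sum_congr rfl fun g _ => sq_groupNorms_apply gr v g

theorem norm_groupNorms_sub_le [Fintype κ] (z x : EuclideanSpace ℝ ι) :
    ‖groupNorms gr z - groupNorms gr x‖ ≤ ‖z - x‖ := by
  rw [← norm_groupNorms gr (z - x), EuclideanSpace.norm_eq, EuclideanSpace.norm_eq]
  refine Real.sqrt_le_sqrt (sum_le_sum fun g _ => ?_)
  simp only [PiLp.sub_apply, Real.norm_eq_abs, sq_abs, groupNorms_apply]
  rw [Real.sq_sqrt (sum_nonneg fun i _ => sq_nonneg _)]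
  exact sqrt_sum_sq_sub_sqrt_sum_sq_sq_le _ _ _

theorem groupNorms_apply_of_eq_mul {x y : EuclideanSpace ℝ ι} (c : κ → ℝ)
    (hy : ∀ i, y i = c (gr i) * x i) (g : κ) :
    groupNorms gr y g = |c g| * groupNorms gr x g := by
  have hgroup : ∑ i with gr i = g, y i ^ 2 = c g ^ 2 * ∑ i with gr i = g, x i ^ 2 := by
    rw [mul_sum]
    refine sum_congr rfl fun i hi => ?_
    rw [hy i, (mem_filter.1 hi).2, mul_pow]
  rw [groupNorms_apply, groupNorms_apply, hgroup, Real.sqrt_mul (sq_nonneg _), Real.sqrt_sq_eq_abs]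

end GroupNorms

open Finset in
theorem l12_ball_projection_formula_general
    (N K : ℕ) (gr : Fin N → Fin K)
    (norm12 : EuclideanSpace ℝ (Fin N) → ℝ)
    (hnorm12 : ∀ v, norm12 v =
      ∑ g : Fin K, Real.sqrt (∑ i ∈ univ.filter (fun i => gr i = g), (v i) ^ 2))
    (α : ℝ) (x : EuclideanSpace ℝ (Fin N))
    -- the vector of group norms
    (r : EuclideanSpace ℝ (Fin K))
    (hr : ∀ g, r g = Real.sqrt (∑ i ∈ univ.filter (fun i => gr i = g), (x i) ^ 2))
    -- `β ≥ 0` and the soft-thresholded vector is the `ℓ₁`-ball projection of `r`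
    (β : ℝ) (hβ : 0 ≤ β)
    (soft : EuclideanSpace ℝ (Fin K)) (hsoft : ∀ g, soft g = max (r g - β) 0)
    (hproj1 : ∑ g : Fin K, |soft g| ≤ α)
    (hproj2 : ∀ s : EuclideanSpace ℝ (Fin K),
      (∑ g : Fin K, |s g| ≤ α) → ‖soft - r‖ ≤ ‖s - r‖)
    -- the groupwise-shrunk vector
    (y : EuclideanSpace ℝ (Fin N))
    (hy : ∀ i, y i = (max (r (gr i) - β) 0 / r (gr i)) * x i) :
    norm12 y ≤ α ∧ ∀ z : EuclideanSpace ℝ (Fin N), norm12 z ≤ α → ‖y - x‖ ≤ ‖z - x‖ := by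
  have hrx : r = groupNorms gr x := by ext g; exact hr g
  have hnorm12_eq v : norm12 v = ∑ g, |groupNorms gr v g| := by
    simp only [hnorm12, groupNorms_apply, abs_of_nonneg (Real.sqrt_nonneg _)]
  have hr0 g : 0 ≤ r g := hrx ▸ groupNorms_nonneg gr x g
  have hsoft_of_r g (h : r g = 0) : soft g = 0 := by simp [hsoft, h, hβ]
  have hy' i : y i = soft (gr i) / r (gr i) * x i := by rw [hy, hsoft]
  have hyx' i : (y - x) i = (soft (gr i) / r (gr i) - 1) * x i := by
    rw [PiLp.sub_apply, hy']; ring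
  have hGy g : |groupNorms gr y g| = |soft g| := by
    rw [groupNorms_apply_of_eq_mul gr (fun g => soft g / r g) hy', ← hrx, abs_mul, abs_abs,
      abs_of_nonneg (hr0 g), abs_div_mul_self_of_imp (hr0 g) (hsoft_of_r g)]
  have hdist : ‖y - x‖ = ‖soft - r‖ := by
    rw [← norm_groupNorms gr, EuclideanSpace.norm_eq, EuclideanSpace.norm_eq]
    congr 1
    refine sum_congr rfl fun g _ => ?_
    rw [groupNorms_apply_of_eq_mul gr (fun g => soft g / r g - 1) hyx', ← hrx, Real.norm_eq_abs, Real.norm_eq_abs,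
      abs_of_nonneg (mul_nonneg (abs_nonneg _) (hr0 g)),
      abs_div_sub_one_mul_self_of_imp (hr0 g) (hsoft_of_r g), PiLp.sub_apply]
  refine ⟨by simpa only [hnorm12_eq, hGy] using hproj1, fun z hz => ?_⟩
  calc ‖y - x‖ = ‖soft - r‖ := hdist
    _ ≤ ‖groupNorms gr z - groupNorms gr x‖ := hrx ▸ hproj2 _ (hnorm12_eq z ▸ hz)
    _ ≤ ‖z - x‖ := norm_groupNorms_sub_le gr z x

open Finset in
/-- the projection onto the `ℓ_{1,2}`-ball of radius `α` acts
groupwise by `x_𝔤 ↦ (max(‖x_𝔤‖₂ − β, 0)/‖x_𝔤‖₂) x_𝔤` (interpreted as `0` when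
`‖x_𝔤‖₂ = 0`), where `β ≥ 0` is such that the Euclidean projection of the vector
of group norms onto the `ℓ₁`-ball of radius `α` is `(max(‖x_𝔤‖₂ − β, 0))_𝔤`. -/
theorem l12_ball_projection_formula
    (N K : ℕ) (gr : Fin N → Fin K) (hgr : Function.Surjective gr)
    (norm12 : EuclideanSpace ℝ (Fin N) → ℝ)
    (hnorm12 : ∀ v, norm12 v =
      ∑ g : Fin K, Real.sqrt (∑ i ∈ univ.filter (fun i => gr i = g), (v i) ^ 2))
    (α : ℝ) (hα : 0 ≤ α) (x : EuclideanSpace ℝ (Fin N))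
    -- the vector of group norms
    (r : EuclideanSpace ℝ (Fin K))
    (hr : ∀ g, r g = Real.sqrt (∑ i ∈ univ.filter (fun i => gr i = g), (x i) ^ 2))
    -- `β ≥ 0` and the soft-thresholded vector is the `ℓ₁`-ball projection of `r`
    (β : ℝ) (hβ : 0 ≤ β)
    (soft : EuclideanSpace ℝ (Fin K)) (hsoft : ∀ g, soft g = max (r g - β) 0)
    (hproj1 : ∑ g : Fin K, |soft g| ≤ α)
    (hproj2 : ∀ s : EuclideanSpace ℝ (Fin K),
      (∑ g : Fin K, |s g| ≤ α) → ‖soft - r‖ ≤ ‖s - r‖)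
    -- the groupwise-shrunk vector
    (y : EuclideanSpace ℝ (Fin N))
    (hy : ∀ i, y i = (max (r (gr i) - β) 0 / r (gr i)) * x i) :
    norm12 y ≤ α ∧ ∀ z : EuclideanSpace ℝ (Fin N), norm12 z ≤ α → ‖y - x‖ ≤ ‖z - x‖ :=
  l12_ball_projection_formula_general N K gr norm12 hnorm12 α x r hr β hβ soft hsoft hproj1 hproj2 y
    hy
end

section
/- The Euclidean projection of a point r ∈ R^n with ‖r‖₁ > α onto the ℓ₁-ball {y : ‖y‖₁ ≤ α} is given by soft-thresholding: P(r)_i = sign(r_i)·max(|r_i| − β, 0), where β > 0 is the unique value such that Σ_i max(|r_i| − β, 0) = α. -/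
/-!
The map `f β = ∑ᵢ max (|rᵢ| - β) 0` is continuous, equals `‖r‖₁ > α` at `0` and `0` at
`‖r‖₁`, and is strictly decreasing wherever it is positive; so `f β = α` has exactly one
solution, and it is positive.

For `P` the soft-thresholding of `r` at `β ≥ 0`, `r - P` is `β` times a subgradient of `‖·‖₁`
at `P`: coordinatewise `(rᵢ - Pᵢ)(yᵢ - Pᵢ) ≤ β (|yᵢ| - |Pᵢ|)`. Summing,
`⟪r - P, y - P⟫ ≤ β (‖y‖₁ - ‖P‖₁) ≤ 0` whenever `‖y‖₁ ≤ ‖P‖₁`, which is the variational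
characterisation of the nearest point of the ball.
-/

open Finset

noncomputable def softThreshold (β x : ℝ) : ℝ := Real.sign x * max (|x| - β) 0

theorem abs_softThreshold {β : ℝ} (hβ : 0 ≤ β) (x : ℝ) :
    |softThreshold β x| = max (|x| - β) 0 := by
  rcases lt_trichotomy x 0 with hx | rfl | hx
  · simp [softThreshold, Real.sign_of_neg hx]
  · simp [softThreshold, hβ]
  · simp [softThreshold, Real.sign_of_pos hx]

theorem sub_softThreshold_mul_le {β : ℝ} (hβ : 0 ≤ β) (x y : ℝ) :
    (x - softThreshold β x) * (y - softThreshold β x) ≤ β * (|y| - |softThreshold β x|) := by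
  rw [abs_softThreshold hβ]
  have hy : -|y| ≤ y ∧ y ≤ |y| := ⟨neg_abs_le y, le_abs_self y⟩
  rcases le_or_gt |x| β with hxβ | hxβ
  · have hxy : x * y ≤ β * |y| :=
      calc x * y ≤ |x| * |y| := by rw [← abs_mul]; exact le_abs_self _
        _ ≤ β * |y| := by gcongr
    simp [softThreshold, max_eq_right (sub_nonpos.2 hxβ), hxy]
  · rcases lt_or_gt_of_ne (fun h : x = 0 => by simp [h] at hxβ; linarith) with hx | hx
    · rw [abs_of_neg hx] at hxβ
      simp only [softThreshold, Real.sign_of_neg hx, abs_of_neg hx,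
        max_eq_left (by linarith : (0:ℝ) ≤ -x - β)]
      nlinarith
    · rw [abs_of_pos hx] at hxβ
      simp only [softThreshold, Real.sign_of_pos hx, abs_of_pos hx,
        max_eq_left (by linarith : (0:ℝ) ≤ x - β)]
      nlinarith

theorem norm_sub_le_norm_sub_of_inner_nonpos {F : Type*} [NormedAddCommGroup F]
    [InnerProductSpace ℝ F] {p r y : F} (h : inner ℝ (r - p) (y - p) ≤ 0) :
    ‖p - r‖ ≤ ‖y - r‖ := by
  have hsq : ‖y - r‖ ^ 2 = ‖y - p‖ ^ 2 - 2 * inner ℝ (r - p) (y - p) + ‖p - r‖ ^ 2 := by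
    rw [show y - r = (y - p) + (p - r) by abel, norm_add_sq_real, real_inner_comm,
      ← neg_sub r p, inner_neg_left, norm_neg]
    ring
  refine (pow_le_pow_iff_left₀ (norm_nonneg _) (norm_nonneg _) two_ne_zero).1 ?_
  nlinarith [sq_nonneg ‖y - p‖]

section Threshold

variable {ι : Type*} [Fintype ι] (r : ι → ℝ)

theorem continuous_sum_max_abs_sub :
    Continuous fun β => ∑ i, max (|r i| - β) 0 := by
  fun_prop

theorem sum_max_abs_sub_lt_of_lt {a b : ℝ} (hab : a < b) (hb : 0 < ∑ i, max (|r i| - b) 0) :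
    ∑ i, max (|r i| - b) 0 < ∑ i, max (|r i| - a) 0 := by
  obtain ⟨i, -, hi⟩ : ∃ i ∈ univ, 0 < max (|r i| - b) 0 :=
    exists_lt_of_sum_lt (by rwa [sum_const_zero])
  have hib : b < |r i| := by simpa using hi
  refine sum_lt_sum (fun j _ => by gcongr) ⟨i, mem_univ i, ?_⟩
  rw [max_eq_left (by linarith), max_eq_left (by linarith)]
  linarith

theorem sum_max_abs_sub_zero : ∑ i, max (|r i| - 0) 0 = ∑ i, |r i| := by
  simp

theorem sum_max_abs_sub_sum_abs : ∑ i, max (|r i| - ∑ j, |r j|) 0 = 0 :=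
  sum_eq_zero fun i _ => max_eq_right <| sub_nonpos.2 <|
    single_le_sum (fun j _ => abs_nonneg (r j)) (mem_univ i)

theorem eq_of_sum_max_abs_sub_eq {a b : ℝ} (ha : 0 < ∑ i, max (|r i| - a) 0)
    (hab : ∑ i, max (|r i| - a) 0 = ∑ i, max (|r i| - b) 0) : a = b := by
  rcases lt_trichotomy a b with h | h | h
  · exact absurd hab (sum_max_abs_sub_lt_of_lt r h (hab ▸ ha)).ne'
  · exact h
  · exact absurd hab (sum_max_abs_sub_lt_of_lt r h ha).ne

theorem existsUnique_pos_sum_max_abs_sub_eq {α : ℝ} (hα : 0 < α) (hr : α < ∑ i, |r i|) :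
    ∃! β : ℝ, 0 < β ∧ ∑ i, max (|r i| - β) 0 = α := by
  obtain ⟨β, hβ, hsum⟩ : ∃ β ∈ Set.Icc 0 (∑ i, |r i|), ∑ i, max (|r i| - β) 0 = α :=
    intermediate_value_Icc' (hα.trans hr).le (continuous_sum_max_abs_sub r).continuousOn
      ⟨(sum_max_abs_sub_sum_abs r).symm ▸ hα.le, (sum_max_abs_sub_zero r).symm ▸ hr.le⟩
  have hβ0 : 0 < β := hβ.1.lt_of_ne <| by
    rintro rfl
    exact hr.ne ((sum_max_abs_sub_zero r).symm.trans hsum).symm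
  exact ⟨β, ⟨hβ0, hsum⟩, fun γ ⟨_, hγ⟩ =>
    (eq_of_sum_max_abs_sub_eq r (hsum ▸ hα) (hsum.trans hγ.symm)).symm⟩

end Threshold

theorem norm_softThreshold_sub_le {ι : Type*} [Fintype ι] {β : ℝ} (hβ : 0 ≤ β)
    {r P : EuclideanSpace ℝ ι} (hP : ∀ i, P i = softThreshold β (r i))
    {y : EuclideanSpace ℝ ι} (hy : ∑ i, |y i| ≤ ∑ i, |P i|) :
    ‖P - r‖ ≤ ‖y - r‖ := by
  refine norm_sub_le_norm_sub_of_inner_nonpos ?_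
  calc inner ℝ (r - P) (y - P) = ∑ i, (r i - P i) * (y i - P i) := by
        simp [PiLp.inner_apply, mul_comm]
    _ ≤ ∑ i, β * (|y i| - |P i|) :=
        sum_le_sum fun i _ => hP i ▸ sub_softThreshold_mul_le hβ (r i) (y i)
    _ = β * (∑ i, |y i| - ∑ i, |P i|) := by rw [← mul_sum, sum_sub_distrib]
    _ ≤ 0 := mul_nonpos_of_nonneg_of_nonpos hβ (sub_nonpos.2 hy)

open Finset in
/-- the Euclidean projection of `r` with `‖r‖₁ > α` onto the
`ℓ₁`-ball of radius `α > 0` is soft-thresholding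
`P(r)ᵢ = sign(rᵢ)·max(|rᵢ| − β, 0)` where `β > 0` is the unique value with
`Σᵢ max(|rᵢ| − β, 0) = α`. -/
theorem l1_ball_projection_soft_thresholding
    (n : ℕ) (α : ℝ) (hα : 0 < α) (r : EuclideanSpace ℝ (Fin n))
    (hr : α < ∑ i : Fin n, |r i|) :
    ∃! β : ℝ, 0 < β ∧ (∑ i : Fin n, max (|r i| - β) 0) = α ∧
      ∀ P : EuclideanSpace ℝ (Fin n),
        (∀ i, P i = Real.sign (r i) * max (|r i| - β) 0) →
        ((∑ i : Fin n, |P i|) ≤ α ∧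
          ∀ y : EuclideanSpace ℝ (Fin n), (∑ i : Fin n, |y i|) ≤ α →
            ‖P - r‖ ≤ ‖y - r‖) := by
  obtain ⟨β, ⟨hβ, hsum⟩, huniq⟩ := existsUnique_pos_sum_max_abs_sub_eq r hα hr
  refine ⟨β, ⟨hβ, hsum, fun P hP => ?_⟩, fun γ hγ => huniq γ ⟨hγ.1, hγ.2.1⟩⟩
  have hPsum : ∑ i, |P i| = α := by
    rw [← hsum]
    exact sum_congr rfl fun i _ => (congrArg abs (hP i)).trans (abs_softThreshold hβ.le (r i))
  exact ⟨hPsum.le, fun y hy => norm_softThreshold_sub_le hβ.le hP (hPsum ▸ hy)⟩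
end
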